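/- Theorem 1, partition case (n₁ > 0): Algorithm 1 with data splitting is (ε₁+ε₂)-differentially private. Fix ε₁, ε₂ > 0, d ≥ 1, censoring thresholds 1 > a_1 > ⋯ > a_M > 0, an arbitrary selection function A : ℤ^M → {a_1, …, a_M}, and a fixed partition of {1, …, n} into disjoint nonempty index sets I₁ of size n₁ and I₂ of size n₂ with n₁ + n₂ = n. For a dataset D ∈ (Δ_{d−1})^n with restrictions D₁ = D|_{I₁} and D₂ = D|_{I₂}, define the output distribution P_D on ℤ^M × ℝ^d × ℝ^d by P_D(A') = ∑_{g ∈ ℤ^M} [∏_{m=1}^M p_TwoGeo(g_m − Score(D)_m | exp(−ε₂/2))] · (μ_{S₀(D₁, A(g)), s₁(g)} ⊗ μ_{S₀(D₂, A(g)), s₂(g)})({(y₁, y₂) : (g, y₁, y₂) ∈ A'}), where s_l(g) = −d log(A(g))/(n_l ε₁) for l = 1, 2 and μ_{m, s} is the measure on ℝ^d with Lebesgue density ∏_{j=1}^d p_Lap(y_j | m_j, s). Then for all datasets D, D' ∈ (Δ_{d−1})^n that differ in at most one point and every measurable set A' ⊆ ℤ^M × ℝ^d × ℝ^d, P_D(A')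 ≤ exp(ε₁ + ε₂) · P_{D'}(A'). -/

import Mathlib

open MeasureTheory

/-- Membership in the `(d-1)`-dimensional simplex. -/
def InSimplex {d : ℕ} (x : Fin d → ℝ) : Prop :=
  (∀ j, 0 ≤ x j) ∧ ∑ j, x j = 1

/-- Censored sufficient statistic of the restriction of `D` to the index set `I`,
averaging over the points of `I`. -/
noncomputable def censoredStatOn {n d : ℕ} (D : Fin n → Fin d → ℝ) (I : Finset (Fin n))
    (a : ℝ) : Fin d → ℝ :=
  fun j => (I.card : ℝ)⁻¹ * ∑ i ∈ I, Real.log (max (D i j) a)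

/-- Number of uncensored individuals in dataset `D` at threshold `t`. -/
noncomputable def uncensoredCount {n d : ℕ} (D : Fin n → Fin d → ℝ) (t : ℝ) : ℕ :=
  (Finset.univ.filter fun i : Fin n => ∀ j, t ≤ D i j).card

/-- The score function `Score(D)_m = u_m - u_{m-1}` with `u_0 = 0`. -/
noncomputable def score {n d M : ℕ} (D : Fin n → Fin d → ℝ) (a : Fin M → ℝ)
    (m : Fin M) : ℤ :=
  (uncensoredCount D (a m) : ℤ) -
    if _ : (m : ℕ) = 0 then 0
    else (uncensoredCount D
      (a ⟨(m : ℕ) - 1, Nat.lt_of_le_of_lt (Nat.sub_le _ _) m.isLt⟩) : ℤ)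

/-- The two-sided geometric probability mass function with parameter `t`. -/
noncomputable def twoSidedGeomPMF (t : ℝ) (k : ℤ) : ℝ :=
  t ^ k.natAbs * (1 - t) / (1 + t)

/-- The measure on ℝ^d whose Lebesgue density is the product of `d` independent
Laplace densities with locations `m j` and common scale `s`. -/
noncomputable def laplaceProductMeasure {d : ℕ} (m : Fin d → ℝ) (s : ℝ) :
    Measure (Fin d → ℝ) :=
  volume.withDensity fun y =>
    ENNReal.ofReal (∏ j, Real.exp (-|y j - m j| / s) / (2 * s))

/-- Output distribution of Algorithm 1 with data splitting: a noisy score computed on the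
full dataset (geometric mechanism with parameter `exp(-ε₂/2)`) selects the threshold
`Asel g`, and then the censored statistics of the two subsets `I₁`, `I₂` are released with
independent Laplace noise of scales `-d log(Asel g)/(n_l ε₁)`, `l = 1, 2`. -/
noncomputable def algOutputSplit {n d M : ℕ} (D : Fin n → Fin d → ℝ)
    (I₁ I₂ : Finset (Fin n)) (a : Fin M → ℝ)
    (Asel : (Fin M → ℤ) → ℝ) (ε₁ ε₂ : ℝ)
    (A' : Set ((Fin M → ℤ) × (Fin d → ℝ) × (Fin d → ℝ))) : ENNReal :=
  ∑' g : Fin M → ℤ,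
    ENNReal.ofReal (∏ m, twoSidedGeomPMF (Real.exp (-ε₂ / 2)) (g m - score D a m)) *
      ((laplaceProductMeasure (censoredStatOn D I₁ (Asel g))
          (-(d : ℝ) * Real.log (Asel g) / (I₁.card * ε₁))).prod
        (laplaceProductMeasure (censoredStatOn D I₂ (Asel g))
          (-(d : ℝ) * Real.log (Asel g) / (I₂.card * ε₁))))
        {y : (Fin d → ℝ) × (Fin d → ℝ) | (g, y.1, y.2) ∈ A'}


section Auxiliary

lemma geo_bound {M : ℕ} (t : ℝ) (ht0 : 0 < t) (ht1 : t < 1)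
    (g s s' : Fin M → ℤ) (hsens : ∑ m, (s m - s' m).natAbs ≤ 2) :
    ∏ m, twoSidedGeomPMF t (g m - s m) ≤
      t⁻¹ * t⁻¹ * ∏ m, twoSidedGeomPMF t (g m - s' m) := by
  have hc : (0:ℝ) ≤ (1 - t) / (1 + t) := div_nonneg (by linarith) (by linarith)
  have hprod : ∀ (u : Fin M → ℤ), ∏ m, twoSidedGeomPMF t (u m)
      = t ^ (∑ m, (u m).natAbs) * ((1 - t) / (1 + t)) ^ M := by
    intro u
    simp only [twoSidedGeomPMF, mul_div_assoc]
    rw [Finset.prod_mul_distrib, Finset.prod_pow_eq_pow_sum, Finset.prod_const,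
      Finset.card_univ, Fintype.card_fin]
  rw [hprod, hprod]
  have hAB : ∑ m, (g m - s' m).natAbs ≤ (∑ m, (g m - s m).natAbs) + 2 := by
    calc ∑ m, (g m - s' m).natAbs
        ≤ ∑ m, ((g m - s m).natAbs + (s m - s' m).natAbs) := by
          refine Finset.sum_le_sum fun m _ => ?_
          have : g m - s' m = (g m - s m) + (s m - s' m) := by ring
          rw [this]; exact Int.natAbs_add_le _ _
      _ = (∑ m, (g m - s m).natAbs) + ∑ m, (s m - s' m).natAbs := Finset.sum_add_distrib
      _ ≤ _ := by omega
  have hpow : t ^ (∑ m, (g m - s m).natAbs) ≤ t⁻¹ * t⁻¹ * t ^ (∑ m, (g m - s' m).natAbs) := by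
    have h2 : t ^ ((∑ m, (g m - s m).natAbs) + 2) ≤ t ^ (∑ m, (g m - s' m).natAbs) :=
      pow_le_pow_of_le_one ht0.le ht1.le hAB
    rw [pow_add] at h2
    have := mul_le_mul_of_nonneg_left h2 (by positivity : (0:ℝ) ≤ t⁻¹ * t⁻¹)
    calc t ^ (∑ m, (g m - s m).natAbs)
        = t⁻¹ * t⁻¹ * (t ^ (∑ m, (g m - s m).natAbs) * t ^ 2) := by
          field_simp
      _ ≤ _ := this
  calc t ^ (∑ m, (g m - s m).natAbs) * ((1 - t) / (1 + t)) ^ M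
      ≤ (t⁻¹ * t⁻¹ * t ^ (∑ m, (g m - s' m).natAbs)) * ((1 - t) / (1 + t)) ^ M :=
        mul_le_mul_of_nonneg_right hpow (pow_nonneg hc M)
    _ = _ := by ring

lemma tele_natAbs (F : ℕ → ℤ) (hm : Monotone F) (h0 : F 0 = 0) (M : ℕ) (h1 : F M ≤ 1) :
    ∑ k ∈ Finset.range M, (F (k+1) - F k).natAbs ≤ 1 := by
  have : ((∑ k ∈ Finset.range M, (F (k+1) - F k).natAbs : ℕ) : ℤ) ≤ 1 := by
    rw [Nat.cast_sum]
    calc (∑ k ∈ Finset.range M, ((F (k+1) - F k).natAbs : ℤ))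
        = ∑ k ∈ Finset.range M, (F (k+1) - F k) := by
          refine Finset.sum_congr rfl fun k _ => ?_
          exact Int.natAbs_of_nonneg (by linarith [hm (Nat.le_succ k)])
      _ = F M - F 0 := Finset.sum_range_sub F M
      _ ≤ 1 := by omega
  exact_mod_cast this

lemma ucount_diff {n d : ℕ} (i₀ : Fin n) (D D' : Fin n → Fin d → ℝ)
    (heq : ∀ i, i ≠ i₀ → D i = D' i) (t : ℝ) :
    (uncensoredCount D t : ℤ) - (uncensoredCount D' t : ℤ)
      = (if ∀ j, t ≤ D i₀ j then (1:ℤ) else 0) - (if ∀ j, t ≤ D' i₀ j then (1:ℤ) else 0) := by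
  have key : ∀ E : Fin n → Fin d → ℝ, (uncensoredCount E t : ℤ)
      = ∑ i : Fin n, (if ∀ j, t ≤ E i j then (1:ℤ) else 0) := by
    intro E
    rw [uncensoredCount, Finset.card_filter]
    push_cast
    rfl
  rw [key, key, ← Finset.sum_sub_distrib]
  rw [Finset.sum_eq_single i₀]
  · intro i _ hi
    rw [heq i hi]; ring
  · intro h; exact absurd (Finset.mem_univ i₀) h

set_option linter.unreachableTactic false in
set_option linter.unusedTactic false in
lemma score_sens {n d M : ℕ} (a : Fin M → ℝ) (ha0 : ∀ m, 0 < a m) (hanti : StrictAnti a)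
    (i₀ : Fin n) (D D' : Fin n → Fin d → ℝ) (heq : ∀ i, i ≠ i₀ → D i = D' i) :
    ∑ m : Fin M, (score D a m - score D' a m).natAbs ≤ 2 := by
  classical
  set b : ℕ → ℝ := fun k => if h : k < M then a ⟨k, h⟩ else 0 with hb
  have hbanti : Antitone b := by
    intro k l hkl
    by_cases hl : l < M
    · have hk : k < M := lt_of_le_of_lt hkl hl
      simp only [hb, dif_pos hl, dif_pos hk]
      exact hanti.antitone (by exact_mod_cast hkl)
    · simp only [hb, dif_neg hl]
      by_cases hk : k < M
      · simp only [dif_pos hk]; exact (ha0 _).le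
      · simp only [dif_neg hk]; exact le_rfl
  have mkF : ∀ E : Fin n → Fin d → ℝ, ∃ F : ℕ → ℤ, Monotone F ∧ F 0 = 0 ∧
      (∀ k, F (k+1) = if ∀ j, b k ≤ E i₀ j then 1 else 0) ∧ (∀ k, F k ≤ 1) := by
    intro E
    refine ⟨fun k => if k = 0 then 0 else if ∀ j, b (k-1) ≤ E i₀ j then 1 else 0,
      ?_, by simp, fun k => by simp, ?_⟩
    · apply monotone_nat_of_le_succ
      intro k
      match k with
      | 0 => show (0:ℤ) ≤ _; split <;> first | omega | (split <;> omega)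
      | k+1 =>
        simp only [if_neg (Nat.succ_ne_zero _), Nat.add_sub_cancel]
        by_cases h : ∀ j, b k ≤ E i₀ j
        · rw [if_pos h, if_pos fun j => le_trans (hbanti (Nat.le_succ k)) (h j)]
        · rw [if_neg h]; split <;> omega
    · intro k
      match k with
      | 0 => simp
      | k+1 => simp only [if_neg (Nat.succ_ne_zero _)]; split <;> omega
  obtain ⟨F, hFm, hF0, hFs, hF1⟩ := mkF D
  obtain ⟨F', hF'm, hF'0, hF's, hF'1⟩ := mkF D'
  have hba : ∀ (k : ℕ) (h : k < M), b k = a ⟨k, h⟩ := fun k h => dif_pos h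
  have hdiff : ∀ m : Fin M, score D a m - score D' a m
      = (F (m.1+1) - F' (m.1+1)) - (F m.1 - F' m.1) := by
    intro m
    have hu1 := ucount_diff i₀ D D' heq (a m)
    have ham : b m.1 = a m := by rw [hba m.1 m.isLt]
    have h1 : F (m.1+1) - F' (m.1+1)
        = (if ∀ j, a m ≤ D i₀ j then (1:ℤ) else 0)
          - (if ∀ j, a m ≤ D' i₀ j then (1:ℤ) else 0) := by
      rw [hFs, hF's, ham]
    rw [score, score]
    by_cases hm0 : (m : ℕ) = 0
    · rw [dif_pos hm0, dif_pos hm0]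
      have hf : F m.1 = 0 := by rw [hm0]; exact hF0
      have hf' : F' m.1 = 0 := by rw [hm0]; exact hF'0
      rw [hf, hf']
      linarith [hu1, h1]
    · rw [dif_neg hm0, dif_neg hm0]
      have hu2 := ucount_diff i₀ D D' heq
        (a ⟨(m:ℕ)-1, Nat.lt_of_le_of_lt (Nat.sub_le _ _) m.isLt⟩)
      obtain ⟨k, hk⟩ : ∃ k, m.1 = k + 1 := ⟨m.1 - 1, by omega⟩
      have hkM : k < M := by omega
      have hfin : (⟨(m:ℕ)-1, Nat.lt_of_le_of_lt (Nat.sub_le _ _) m.isLt⟩ : Fin M) = ⟨k, hkM⟩ := by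
        apply Fin.ext; simp [hk]
      have h2 : F m.1 - F' m.1
          = (if ∀ j, a ⟨(m:ℕ)-1, Nat.lt_of_le_of_lt (Nat.sub_le _ _) m.isLt⟩ ≤ D i₀ j then (1:ℤ) else 0)
            - (if ∀ j, a ⟨(m:ℕ)-1, Nat.lt_of_le_of_lt (Nat.sub_le _ _) m.isLt⟩ ≤ D' i₀ j then (1:ℤ) else 0) := by
        rw [hfin, hk, hFs, hF's, hba k hkM]
      linarith [hu1, hu2, h1, h2]
  calc ∑ m : Fin M, (score D a m - score D' a m).natAbs
      = ∑ k ∈ Finset.range M, ((F (k+1) - F' (k+1)) - (F k - F' k)).natAbs := by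
        rw [← Fin.sum_univ_eq_sum_range (fun k => ((F (k+1) - F' (k+1)) - (F k - F' k)).natAbs)]
        exact Finset.sum_congr rfl fun m _ => by rw [hdiff m]
    _ ≤ ∑ k ∈ Finset.range M, ((F (k+1) - F k).natAbs + (F' (k+1) - F' k).natAbs) := by
        refine Finset.sum_le_sum fun k _ => ?_
        have h3 : (F (k+1) - F' (k+1)) - (F k - F' k)
            = (F (k+1) - F k) + -(F' (k+1) - F' k) := by ring
        rw [h3]
        calc ((F (k+1) - F k) + -(F' (k+1) - F' k)).natAbs
            ≤ (F (k+1) - F k).natAbs + (-(F' (k+1) - F' k)).natAbs := Int.natAbs_add_le _ _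
          _ = _ := by rw [Int.natAbs_neg]
    _ = (∑ k ∈ Finset.range M, (F (k+1) - F k).natAbs)
        + ∑ k ∈ Finset.range M, (F' (k+1) - F' k).natAbs := Finset.sum_add_distrib
    _ ≤ 1 + 1 := Nat.add_le_add (tele_natAbs F hFm hF0 M (hF1 M)) (tele_natAbs F' hF'm hF'0 M (hF'1 M))

lemma laplace_sigmaFinite {d : ℕ} (m : Fin d → ℝ) (s : ℝ) :
    SigmaFinite (laplaceProductMeasure m s) := by
  rw [laplaceProductMeasure]; infer_instance

lemma laplace_le {d : ℕ} (m m' : Fin d → ℝ) (s ε : ℝ) (hs : 0 < s) (hε : 0 ≤ ε)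
    (h : ∑ j, |m j - m' j| ≤ ε * s) :
    laplaceProductMeasure m s ≤ ENNReal.ofReal (Real.exp ε) • laplaceProductMeasure m' s := by
  rw [laplaceProductMeasure, laplaceProductMeasure,
    ← withDensity_smul' _ _ (by simp : ENNReal.ofReal (Real.exp ε) ≠ ⊤)]
  refine withDensity_mono (Filter.Eventually.of_forall fun y => ?_)
  show ENNReal.ofReal _ ≤ ENNReal.ofReal (Real.exp ε) * ENNReal.ofReal _
  rw [← ENNReal.ofReal_mul (Real.exp_nonneg ε)]
  apply ENNReal.ofReal_le_ofReal
  have h2s : (0:ℝ) < (2*s)^d := by positivity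
  have key : ∀ mm : Fin d → ℝ, ∏ j, Real.exp (-|y j - mm j| / s) / (2 * s)
      = Real.exp (∑ j, -|y j - mm j| / s) / (2*s)^d := by
    intro mm
    rw [Finset.prod_div_distrib, Finset.prod_const, Finset.card_univ, Fintype.card_fin,
      ← Real.exp_sum]
  rw [key, key, ← mul_div_assoc, ← Real.exp_add]
  have hexp : ∑ j, -|y j - m j| / s ≤ ε + ∑ j, -|y j - m' j| / s := by
    have hterm : ∑ j, (|y j - m' j| - |y j - m j|) ≤ ε * s := by
      refine le_trans (Finset.sum_le_sum fun j _ => ?_) h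
      calc |y j - m' j| - |y j - m j|
          ≤ |(y j - m' j) - (y j - m j)| := abs_sub_abs_le_abs_sub _ _
        _ = |m j - m' j| := by rw [show (y j - m' j) - (y j - m j) = m j - m' j by ring]
    rw [← Finset.sum_div, ← Finset.sum_div, ← sub_le_iff_le_add, ← sub_div]
    rw [div_le_iff₀ hs]
    calc (∑ j, -|y j - m j|) - ∑ j, -|y j - m' j|
        = ∑ j, (|y j - m' j| - |y j - m j|) := by
          rw [← Finset.sum_sub_distrib]; exact Finset.sum_congr rfl fun j _ => by ring
      _ ≤ ε * s := hterm
  gcongr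

lemma simplex_le_one {d : ℕ} {x : Fin d → ℝ} (hx : InSimplex x) (j : Fin d) : x j ≤ 1 := by
  calc x j ≤ ∑ i, x i := Finset.single_le_sum (fun i _ => hx.1 i) (Finset.mem_univ j)
    _ = 1 := hx.2

lemma stat_congr {n d : ℕ} (D D' : Fin n → Fin d → ℝ) (I : Finset (Fin n)) (x : ℝ)
    (h : ∀ i ∈ I, D i = D' i) : censoredStatOn D I x = censoredStatOn D' I x := by
  funext j
  unfold censoredStatOn
  congr 1
  exact Finset.sum_congr rfl fun i hi => by rw [h i hi]

lemma stat_sens {n d : ℕ} (D D' : Fin n → Fin d → ℝ) (I : Finset (Fin n)) (i₀ : Fin n)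
    (hi₀ : i₀ ∈ I) (heq : ∀ i, i ≠ i₀ → D i = D' i)
    (hD : ∀ i, InSimplex (D i)) (hD' : ∀ i, InSimplex (D' i))
    (x : ℝ) (hx0 : 0 < x) (hx1 : x ≤ 1) :
    ∑ j, |censoredStatOn D I x j - censoredStatOn D' I x j|
      ≤ (d : ℝ) * (-Real.log x) / I.card := by
  have hcard : (0:ℝ) < I.card := by
    exact_mod_cast Finset.card_pos.mpr ⟨i₀, hi₀⟩
  have hbound : ∀ j, |censoredStatOn D I x j - censoredStatOn D' I x j|
      ≤ (I.card : ℝ)⁻¹ * (-Real.log x) := by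
    intro j
    have hdiff : censoredStatOn D I x j - censoredStatOn D' I x j
        = (I.card : ℝ)⁻¹ * (Real.log (max (D i₀ j) x) - Real.log (max (D' i₀ j) x)) := by
      unfold censoredStatOn
      rw [← mul_sub, ← Finset.sum_sub_distrib]
      congr 1
      rw [Finset.sum_eq_single_of_mem i₀ hi₀]
      intro i _ hi
      rw [heq i hi]; ring
    rw [hdiff, abs_mul, abs_of_nonneg (by positivity : (0:ℝ) ≤ (I.card : ℝ)⁻¹)]
    refine mul_le_mul_of_nonneg_left ?_ (by positivity)
    have hrange : ∀ (u : ℝ), 0 ≤ u → u ≤ 1 →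
        Real.log x ≤ Real.log (max u x) ∧ Real.log (max u x) ≤ 0 := by
      intro u hu hu1
      constructor
      · exact Real.log_le_log hx0 (le_max_right u x)
      · exact Real.log_nonpos (le_trans hx0.le (le_max_right u x)) (max_le hu1 hx1)
    obtain ⟨hl1, hl2⟩ := hrange (D i₀ j) ((hD i₀).1 j) (simplex_le_one (hD i₀) j)
    obtain ⟨hl1', hl2'⟩ := hrange (D' i₀ j) ((hD' i₀).1 j) (simplex_le_one (hD' i₀) j)
    rw [abs_le]
    constructor <;> linarith
  calc ∑ j, |censoredStatOn D I x j - censoredStatOn D' I x j|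
      ≤ ∑ _j : Fin d, (I.card : ℝ)⁻¹ * (-Real.log x) :=
        Finset.sum_le_sum fun j _ => hbound j
    _ = (d:ℝ) * ((I.card : ℝ)⁻¹ * (-Real.log x)) := by
        rw [Finset.sum_const, Finset.card_univ, Fintype.card_fin, nsmul_eq_mul]
    _ = (d : ℝ) * (-Real.log x) / I.card := by field_simp

lemma prod_le_of_le_smul {d : ℕ} (μ μ' ν ν' : Measure (Fin d → ℝ))
    [SigmaFinite ν] [SigmaFinite ν'] (c : ENNReal) (hc : c ≠ ⊤)
    (h : (μ ≤ c • μ' ∧ ν = ν') ∨ (μ = μ' ∧ ν ≤ c • ν'))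
    (S : Set ((Fin d → ℝ) × (Fin d → ℝ))) (hS : MeasurableSet S) :
    (μ.prod ν) S ≤ c * (μ'.prod ν') S := by
  rcases h with ⟨hμ, hν⟩ | ⟨hμ, hν⟩
  · subst hν
    rw [Measure.prod_apply hS, Measure.prod_apply hS]
    calc ∫⁻ xx, ν (Prod.mk xx ⁻¹' S) ∂μ
        ≤ ∫⁻ xx, ν (Prod.mk xx ⁻¹' S) ∂(c • μ') := lintegral_mono' hμ le_rfl
      _ = c * ∫⁻ xx, ν (Prod.mk xx ⁻¹' S) ∂μ' := lintegral_smul_measure c _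
  · subst hμ
    rw [Measure.prod_apply hS, Measure.prod_apply hS]
    calc ∫⁻ xx, ν (Prod.mk xx ⁻¹' S) ∂μ
        ≤ ∫⁻ xx, c * ν' (Prod.mk xx ⁻¹' S) ∂μ := by
          refine lintegral_mono fun xx => ?_
          calc ν (Prod.mk xx ⁻¹' S) ≤ (c • ν') (Prod.mk xx ⁻¹' S) := hν _
            _ = c * ν' (Prod.mk xx ⁻¹' S) := by simp
      _ = c * ∫⁻ xx, ν' (Prod.mk xx ⁻¹' S) ∂μ := lintegral_const_mul' c _ hc

end Auxiliary

/-- Theorem 1, partition case: Algorithm 1 with data splitting is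
`(ε₁ + ε₂)`-differentially private. -/
theorem algorithm_one_DP_partition {n d M : ℕ} (hd : 1 ≤ d)
    (ε₁ ε₂ : ℝ) (hε₁ : 0 < ε₁) (hε₂ : 0 < ε₂)
    (a : Fin M → ℝ) (ha : ∀ m, 0 < a m ∧ a m < 1) (hanti : StrictAnti a)
    (Asel : (Fin M → ℤ) → ℝ) (hAsel : ∀ g, ∃ m, Asel g = a m)
    (I₁ I₂ : Finset (Fin n)) (hI : Disjoint I₁ I₂) (hIunion : I₁ ∪ I₂ = Finset.univ)
    (hI₁ : I₁.Nonempty) (hI₂ : I₂.Nonempty)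
    (D D' : Fin n → Fin d → ℝ)
    (hD : ∀ i, InSimplex (D i)) (hD' : ∀ i, InSimplex (D' i))
    (hnb : ∀ i₁ i₂ : Fin n, D i₁ ≠ D' i₁ → D i₂ ≠ D' i₂ → i₁ = i₂)
    (A' : Set ((Fin M → ℤ) × (Fin d → ℝ) × (Fin d → ℝ))) (hA' : MeasurableSet A') :
    algOutputSplit D I₁ I₂ a Asel ε₁ ε₂ A'
      ≤ ENNReal.ofReal (Real.exp (ε₁ + ε₂)) * algOutputSplit D' I₁ I₂ a Asel ε₁ ε₂ A' := by
  classical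
  by_cases hDD : D = D'
  · subst hDD
    refine le_mul_of_one_le_left zero_le ?_
    rw [← ENNReal.ofReal_one]
    exact ENNReal.ofReal_le_ofReal (Real.one_le_exp (by linarith))
  · obtain ⟨i₀, hne⟩ : ∃ i, D i ≠ D' i := by
      by_contra h; push_neg at h; exact hDD (funext h)
    have heq : ∀ i, i ≠ i₀ → D i = D' i := by
      intro i hi
      by_contra hc
      exact hi (hnb i i₀ hc hne)
    rw [algOutputSplit, algOutputSplit, ← ENNReal.tsum_mul_left]
    refine ENNReal.tsum_le_tsum fun g => ?_
    obtain ⟨m₀, hm₀⟩ := hAsel g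
    have hx0 : 0 < Asel g := hm₀ ▸ (ha m₀).1
    have hx1 : Asel g < 1 := hm₀ ▸ (ha m₀).2
    have hlog : Real.log (Asel g) < 0 := Real.log_neg hx0 hx1
    have hdpos : (0:ℝ) < d := by exact_mod_cast lt_of_lt_of_le zero_lt_one hd
    set S : Set ((Fin d → ℝ) × (Fin d → ℝ)) := {y | (g, y.1, y.2) ∈ A'} with hSdef
    have hS : MeasurableSet S := hA'.preimage measurable_prodMk_left
    -- geometric factor bound
    have ht0 : 0 < Real.exp (-ε₂/2) := Real.exp_pos _
    have ht1 : Real.exp (-ε₂/2) < 1 := by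
      rw [Real.exp_lt_one_iff]; linarith
    have hsens := score_sens a (fun m => (ha m).1) hanti i₀ D D' heq
    have hgeo := geo_bound _ ht0 ht1 g (score D a) (score D' a) hsens
    have hinv : (Real.exp (-ε₂/2))⁻¹ * (Real.exp (-ε₂/2))⁻¹ = Real.exp ε₂ := by
      rw [← Real.exp_neg, ← Real.exp_add]; ring_nf
    rw [hinv] at hgeo
    have hgeo2 : ENNReal.ofReal (∏ m, twoSidedGeomPMF (Real.exp (-ε₂ / 2)) (g m - score D a m))
        ≤ ENNReal.ofReal (Real.exp ε₂) *
          ENNReal.ofReal (∏ m, twoSidedGeomPMF (Real.exp (-ε₂ / 2)) (g m - score D' a m)) := by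
      rw [← ENNReal.ofReal_mul (Real.exp_nonneg _)]
      exact ENNReal.ofReal_le_ofReal hgeo
    -- measure factor bound
    have hscale : ∀ I : Finset (Fin n), I.Nonempty →
        0 < -(d : ℝ) * Real.log (Asel g) / (I.card * ε₁) := by
      intro I hIne
      have hcard : (0:ℝ) < I.card := by exact_mod_cast Finset.card_pos.mpr hIne
      apply div_pos (by nlinarith) (mul_pos hcard hε₁)
    have hstat : ∀ I : Finset (Fin n), i₀ ∈ I →
        laplaceProductMeasure (censoredStatOn D I (Asel g))
            (-(d : ℝ) * Real.log (Asel g) / (I.card * ε₁))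
          ≤ ENNReal.ofReal (Real.exp ε₁) •
            laplaceProductMeasure (censoredStatOn D' I (Asel g))
              (-(d : ℝ) * Real.log (Asel g) / (I.card * ε₁)) := by
      intro I hi₀
      have hcard : (0:ℝ) < I.card := by exact_mod_cast Finset.card_pos.mpr ⟨i₀, hi₀⟩
      refine laplace_le _ _ _ _ (hscale I ⟨i₀, hi₀⟩) hε₁.le ?_
      refine le_trans (stat_sens D D' I i₀ hi₀ heq hD hD' (Asel g) hx0 hx1.le) ?_
      have hE : ε₁ * (-(d:ℝ) * Real.log (Asel g) / ((I.card:ℝ) * ε₁))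
          = (d:ℝ) * -Real.log (Asel g) / I.card := by
        field_simp
      rw [hE]
    haveI := laplace_sigmaFinite (censoredStatOn D I₂ (Asel g))
      (-(d : ℝ) * Real.log (Asel g) / (I₂.card * ε₁))
    haveI := laplace_sigmaFinite (censoredStatOn D' I₂ (Asel g))
      (-(d : ℝ) * Real.log (Asel g) / (I₂.card * ε₁))
    have hmem : i₀ ∈ I₁ ∨ i₀ ∈ I₂ := by
      have : i₀ ∈ I₁ ∪ I₂ := hIunion ▸ Finset.mem_univ i₀
      exact Finset.mem_union.mp this
    have hprod : ((laplaceProductMeasure (censoredStatOn D I₁ (Asel g))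
          (-(d : ℝ) * Real.log (Asel g) / (I₁.card * ε₁))).prod
        (laplaceProductMeasure (censoredStatOn D I₂ (Asel g))
          (-(d : ℝ) * Real.log (Asel g) / (I₂.card * ε₁)))) S
        ≤ ENNReal.ofReal (Real.exp ε₁) *
          ((laplaceProductMeasure (censoredStatOn D' I₁ (Asel g))
              (-(d : ℝ) * Real.log (Asel g) / (I₁.card * ε₁))).prod
            (laplaceProductMeasure (censoredStatOn D' I₂ (Asel g))
              (-(d : ℝ) * Real.log (Asel g) / (I₂.card * ε₁)))) S := by
      refine prod_le_of_le_smul _ _ _ _ _ (by simp) ?_ S hS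
      rcases hmem with hm | hm
      · left
        refine ⟨hstat I₁ hm, ?_⟩
        refine congrArg₂ laplaceProductMeasure (stat_congr D D' I₂ (Asel g) fun i hi => ?_) rfl
        exact heq i fun h => (Finset.disjoint_right.mp hI hi) (h ▸ hm)
      · right
        refine ⟨?_, hstat I₂ hm⟩
        refine congrArg₂ laplaceProductMeasure (stat_congr D D' I₁ (Asel g) fun i hi => ?_) rfl
        exact heq i fun h => (Finset.disjoint_left.mp hI hi) (h ▸ hm)
    calc ENNReal.ofReal (∏ m, twoSidedGeomPMF (Real.exp (-ε₂ / 2)) (g m - score D a m)) *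
          ((laplaceProductMeasure (censoredStatOn D I₁ (Asel g))
              (-(d : ℝ) * Real.log (Asel g) / (I₁.card * ε₁))).prod
            (laplaceProductMeasure (censoredStatOn D I₂ (Asel g))
              (-(d : ℝ) * Real.log (Asel g) / (I₂.card * ε₁)))) S
        ≤ (ENNReal.ofReal (Real.exp ε₂) *
            ENNReal.ofReal (∏ m, twoSidedGeomPMF (Real.exp (-ε₂ / 2)) (g m - score D' a m))) *
          (ENNReal.ofReal (Real.exp ε₁) *
            ((laplaceProductMeasure (censoredStatOn D' I₁ (Asel g))
                (-(d : ℝ) * Real.log (Asel g) / (I₁.card * ε₁))).prod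
              (laplaceProductMeasure (censoredStatOn D' I₂ (Asel g))
                (-(d : ℝ) * Real.log (Asel g) / (I₂.card * ε₁)))) S) :=
          mul_le_mul' hgeo2 hprod
      _ = _ := by
          rw [mul_mul_mul_comm, ← ENNReal.ofReal_mul (Real.exp_nonneg _), ← Real.exp_add]
          ring_nf
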